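/- Let G be a countable group with sofic approximation 𝔖, and let T₁, T₂ be measure-preserving actions of G on standard probability spaces. If T₁ is weakly contained in T₂ and T₂ is sofic, then T₁ is sofic. -/

import Mathlib

open Filter Topology
open scoped ENNReal
open MeasureTheory (Measure MeasurePreserving IsProbabilityMeasure)

namespace SoficPaper

/-- The normalized Hamming distance between two permutations of a (finite) set `V`. -/
noncomputable def hammingDist {V : Type*} (g₁ g₂ : Equiv.Perm V) : ℝ :=
  (Set.ncard {v | g₁ v ≠ g₂ v} : ℝ) / (Nat.card V : ℝ)

/-- `γ` is an enumeration `(γ_i)_{i ≥ 1}` of the elements of `G`. -/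
def IsEnumeration {G : Type*} (γ : ℕ → G) : Prop :=
  (∀ g : G, ∃ i : ℕ, 1 ≤ i ∧ γ i = g) ∧
  ∀ i j : ℕ, 1 ≤ i → 1 ≤ j → γ i = γ j → i = j

open scoped Classical in
/-- The metric on `A^G` (with `A` carrying the discrete metric):
`d(t₁,t₂) = sup_i (1/i) · d_A(t₁(γ_i), t₂(γ_i))`.  (The `i = 0` term vanishes since `1/0 = 0`.) -/
noncomputable def seqDist {G A : Type*} (γ : ℕ → G) (t₁ t₂ : G → A) : ℝ :=
  ⨆ i : ℕ, (1 / (i : ℝ)) * (if t₁ (γ i) = t₂ (γ i) then 0 else 1)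

/-- The Kantorovich distance between two (probability) measures on `A^G`:
the infimum of `∫ d dξ` over all couplings `ξ`.  It metrizes the weak* topology. -/
noncomputable def kantorovich {G A : Type*} [MeasurableSpace A] (γ : ℕ → G)
    (μ₁ μ₂ : Measure (G → A)) : ℝ :=
  sInf { r : ℝ | ∃ ξ : Measure ((G → A) × (G → A)), IsProbabilityMeasure ξ ∧
    ξ.map Prod.fst = μ₁ ∧ ξ.map Prod.snd = μ₂ ∧ r = ∫ p, seqDist γ p.1 p.2 ∂ξ }

/-- The action of `G` on `X` is measure preserving for `μ`. -/
def IsPmpAction (G : Type*) [Group G] {X : Type*} [MeasurableSpace X] [MulAction G X]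
    (μ : Measure X) : Prop :=
  ∀ g : G, MeasurePreserving (fun x : X => g • x) μ μ

/-- `f^G : X → A^G`, `f^G(x)(g) = f(g • x)`. -/
def obsG (G : Type*) [Group G] {X A : Type*} [MulAction G X] (f : X → A) : X → G → A :=
  fun x g => f (g • x)

/-- `distr(f) = (f^G)_* μ`. -/
noncomputable def distr (G : Type*) [Group G] {X A : Type*} [MeasurableSpace X]
    [MeasurableSpace A] [MulAction G X] (μ : Measure X) (f : X → A) : Measure (G → A) :=
  μ.map (obsG G f)

/-- The metric on observables: `d(f₁,f₂) = μ {x | f₁ x ≠ f₂ x}`. -/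
noncomputable def obsDist {X A : Type*} [MeasurableSpace X] (μ : Measure X)
    (f₁ f₂ : X → A) : ℝ :=
  (μ {x | f₁ x ≠ f₂ x}).toReal

/-- `θ_{v,σ} : A^V → A^G`, `θ_{v,σ}(τ)(g) = τ(σ^g(v))`. -/
def theta {G V A : Type*} (σ : G → Equiv.Perm V) (v : V) (τ : V → A) : G → A :=
  fun g => τ (σ g v)

/-- `Θ_σ(η) = (1/|V|) ∑_{v ∈ V} (θ_{v,σ})_* η`. -/
noncomputable def Theta {G V A : Type*} [MeasurableSpace A] (σ : G → Equiv.Perm V)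
    (η : Measure (V → A)) : Measure (G → A) :=
  (Nat.card V : ℝ≥0∞)⁻¹ • MeasureTheory.Measure.sum (fun v : V => η.map (theta σ v))

/-- `((V_i), (σ_i))` is a sofic approximation of `G`. -/
def IsSoficApprox {G : Type*} [Group G] {V : ℕ → Type*}
    (σ : ∀ i, G → Equiv.Perm (V i)) : Prop :=
  (∀ g₁ g₂ : G, g₁ ≠ g₂ →
      Tendsto (fun i => hammingDist (σ i g₁) (σ i g₂)) atTop (𝓝 1)) ∧
  (∀ g₁ g₂ : G,
      Tendsto (fun i => hammingDist (σ i g₁ * σ i g₂) (σ i (g₁ * g₂))) atTop (𝓝 0))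

/-- A group is sofic if it admits a sofic approximation. -/
def SoficGroup (G : Type*) [Group G] : Prop :=
  ∃ (V : ℕ → Type) (σ : ∀ i, G → Equiv.Perm (V i)), (∀ i, Finite (V i)) ∧ IsSoficApprox σ

/-- `σ : G → Sym(V)` is `k`-good with respect to the enumeration `γ`. -/
def kGood {G : Type*} [Group G] (γ : ℕ → G) {V : Type*} (σ : G → Equiv.Perm V)
    (k : ℕ) : Prop :=
  (∀ i j : ℕ, 1 ≤ i → i < j → j ≤ k →
      hammingDist (σ (γ i)) (σ (γ j)) > 1 - 1 / (k : ℝ)) ∧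
  (∀ i j : ℕ, 1 ≤ i → i ≤ k → 1 ≤ j → j ≤ k →
      hammingDist (σ (γ i) * σ (γ j)) (σ (γ i * γ j)) < 1 / (k : ℝ))

/-- The action is `𝔖`-approximable: every observable admits microstates along the
full sequence, with `Θ_{σ_i}(δ_{τ_i}) → distr f` in the weak* topology (metrized by
the Kantorovich distance). -/
def Approximable (G : Type*) [Group G] (γ : ℕ → G) {X : Type*} [MeasurableSpace X]
    [MulAction G X] (μ : Measure X) {V : ℕ → Type}
    (σ : ∀ i, G → Equiv.Perm (V i)) : Prop :=
  ∀ (A : Type) [Fintype A] [MeasurableSpace A] [DiscreteMeasurableSpace A] (f : X → A),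
    Measurable f → ∃ τ : ∀ i, V i → A,
      Tendsto (fun i => kantorovich γ (Theta (σ i) (MeasureTheory.Measure.dirac (τ i)))
        (distr G μ f)) atTop (𝓝 0)

/-- The action is `𝔖`-weakly approximable: every observable admits microstates along
some subsequence. -/
def WeaklyApproximable (G : Type*) [Group G] (γ : ℕ → G) {X : Type*} [MeasurableSpace X]
    [MulAction G X] (μ : Measure X) {V : ℕ → Type}
    (σ : ∀ i, G → Equiv.Perm (V i)) : Prop :=
  ∀ (A : Type) [Fintype A] [MeasurableSpace A] [DiscreteMeasurableSpace A] (f : X → A),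
    Measurable f → ∃ φ : ℕ → ℕ, StrictMono φ ∧ ∃ τ : ∀ j, V (φ j) → A,
      Tendsto (fun j => kantorovich γ (Theta (σ (φ j)) (MeasureTheory.Measure.dirac (τ j)))
        (distr G μ f)) atTop (𝓝 0)

/-- A pmp action is sofic if it is weakly approximable with respect to some sofic
approximation of `G`. -/
def SoficAction (G : Type*) [Group G] (γ : ℕ → G) {X : Type*} [MeasurableSpace X]
    [MulAction G X] (μ : Measure X) : Prop :=
  ∃ (V : ℕ → Type) (σ : ∀ i, G → Equiv.Perm (V i)),
    (∀ i, Finite (V i)) ∧ IsSoficApprox σ ∧ WeaklyApproximable G γ μ σ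

/-- Weak containment of pmp actions: every observable of the first action has its
distribution approximated by distributions of observables of the second action. -/
def WeaklyContained (G : Type*) [Group G] (γ : ℕ → G) {X₁ X₂ : Type*}
    [MeasurableSpace X₁] [MeasurableSpace X₂] [MulAction G X₁] [MulAction G X₂]
    (μ₁ : Measure X₁) (μ₂ : Measure X₂) : Prop :=
  ∀ (A : Type) [Fintype A] [MeasurableSpace A] [DiscreteMeasurableSpace A] (f₁ : X₁ → A),
    Measurable f₁ → ∀ ε : ℝ, 0 < ε →
      ∃ f₂ : X₂ → A, Measurable f₂ ∧ kantorovich γ (distr G μ₂ f₂) (distr G μ₁ f₁) < ε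

/-- A tower of observables on `(X, μ)`. -/
structure ObsTower {X : Type*} [MeasurableSpace X] (μ : Measure X) where
  A : ℕ → Type
  [fintypeA : ∀ i, Fintype (A i)]
  [measA : ∀ i, MeasurableSpace (A i)]
  [discA : ∀ i, DiscreteMeasurableSpace (A i)]
  f : ∀ i, X → A i
  measf : ∀ i, Measurable (f i)
  π : ∀ i j, j < i → A i → A j
  compat : ∀ i j (h : j < i), ∀ᵐ x ∂μ, π i j h (f i x) = f j x
  π_comp : ∀ i j k (hij : i < j) (hjk : j < k),
    π j i hij ∘ π k j hjk = π k i (hij.trans hjk)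

attribute [instance] ObsTower.fintypeA ObsTower.measA ObsTower.discA

/-- Sufficiency of a sequence of observables: every observable is approximated, up to
any `ε > 0`, by a post-composition of some member of the sequence. -/
def SufficientSeq {X : Type*} [MeasurableSpace X] (μ : Measure X) (A : ℕ → Type)
    (f : ∀ i, X → A i) : Prop :=
  ∀ (B : Type) [Fintype B] [MeasurableSpace B] [DiscreteMeasurableSpace B] (g : X → B),
    Measurable g → ∀ ε : ℝ, 0 < ε →
      ∃ (i : ℕ) (π' : A i → B), (μ {x | π' (f i x) ≠ g x}).toReal < ε

/-- A sufficient tower of observables. -/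
def ObsTower.Sufficient {X : Type*} [MeasurableSpace X] {μ : Measure X}
    (T : ObsTower μ) : Prop :=
  SufficientSeq μ T.A T.f

/-- A pmp action of `G` on a standard probability space, bundled. -/
structure PmpSystem (G : Type*) [Group G] where
  X : Type
  [mX : MeasurableSpace X]
  [act : MulAction G X]
  sb : StandardBorelSpace X
  μ : Measure X
  prob : IsProbabilityMeasure μ
  pmp : IsPmpAction G μ

attribute [instance] PmpSystem.mX PmpSystem.act

/-- A universal sofic action: a sofic action weakly containing every sofic action. -/
def UniversalSoficAction (G : Type*) [Group G] (γ : ℕ → G) (S : PmpSystem G) : Prop :=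
  SoficAction G γ S.μ ∧
  ∀ T : PmpSystem G, SoficAction G γ T.μ → WeaklyContained G γ T.μ S.μ

/-- A maximal sofic approximation: a sofic approximation with respect to which every
universal sofic action is approximable. -/
def MaximalSoficApprox (G : Type*) [Group G] (γ : ℕ → G) {V : ℕ → Type}
    (σ : ∀ i, G → Equiv.Perm (V i)) : Prop :=
  (∀ i, Finite (V i)) ∧ IsSoficApprox σ ∧
  ∀ S : PmpSystem G, UniversalSoficAction G γ S → Approximable G γ S.μ σ

/-- The product of two measures on `ι → A`, viewed as a measure on `ι → A × A`. -/
noncomputable def pairMeasure {ι A : Type*} [MeasurableSpace A]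
    (η₁ η₂ : Measure (ι → A)) : Measure (ι → A × A) :=
  (η₁.prod η₂).map (fun p i => (p.1 i, p.2 i))

/-- The action is strongly sofic (admits a doubly-quenched approximation) with respect
to `((V_i), (σ_i))`. -/
def StronglySofic (G : Type*) [Group G] (γ : ℕ → G) {X : Type*} [MeasurableSpace X]
    [MulAction G X] (μ : Measure X) {V : ℕ → Type}
    (σ : ∀ i, G → Equiv.Perm (V i)) : Prop :=
  ∀ (A : Type) [Fintype A] [MeasurableSpace A] [DiscreteMeasurableSpace A] (f : X → A),
    Measurable f → ∃ η : ∀ i, Measure (V i → A),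
      (∀ i, IsProbabilityMeasure (η i)) ∧
      Tendsto (fun i => kantorovich γ (Theta (σ i) (pairMeasure (η i) (η i)))
          (pairMeasure (distr G μ f) (distr G μ f))) atTop (𝓝 0) ∧
      ∀ ε : ℝ, 0 < ε →
        Tendsto (fun i => pairMeasure (η i) (η i)
            {ξ : V i → A × A | kantorovich γ (Theta (σ i) (MeasureTheory.Measure.dirac ξ))
              (pairMeasure (distr G μ f) (distr G μ f)) < ε})
          atTop (𝓝 (1 : ℝ≥0∞))


/-! If `f₂` on `X₂` has distribution `ε`-close to that of `f₁` in the Kantorovich distance, then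
microstates that are `ε`-good for `f₂` are `2ε`-good for `f₁`, by the triangle inequality. That
inequality is proved in the usual way: two near-optimal couplings sharing the middle marginal are
glued into one measure on a triple product by disintegration, and `seqDist` is a pseudometric. -/

open MeasureTheory ProbabilityTheory

section SeqDist

variable {G A : Type*} (γ : ℕ → G)

open scoped Classical in
lemma seqDist_term_nonneg (t₁ t₂ : G → A) (i : ℕ) :
    0 ≤ (1 / (i : ℝ)) * (if t₁ (γ i) = t₂ (γ i) then 0 else 1) := by
  split_ifs <;> positivity

open scoped Classical in
lemma seqDist_term_le_one (t₁ t₂ : G → A) (i : ℕ) :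
    (1 / (i : ℝ)) * (if t₁ (γ i) = t₂ (γ i) then 0 else 1) ≤ 1 := by
  refine mul_le_one₀ (by simpa using Nat.cast_inv_le_one (α := ℝ) i) ?_ ?_ <;>
    split_ifs <;> norm_num

open scoped Classical in
lemma seqDist_bddAbove (t₁ t₂ : G → A) :
    BddAbove (Set.range fun i : ℕ =>
      (1 / (i : ℝ)) * (if t₁ (γ i) = t₂ (γ i) then 0 else 1)) :=
  ⟨1, by rintro _ ⟨i, rfl⟩; exact seqDist_term_le_one γ t₁ t₂ i⟩

lemma seqDist_nonneg (t₁ t₂ : G → A) : 0 ≤ seqDist γ t₁ t₂ :=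
  Real.iSup_nonneg (seqDist_term_nonneg γ t₁ t₂)

lemma seqDist_le_one (t₁ t₂ : G → A) : seqDist γ t₁ t₂ ≤ 1 :=
  ciSup_le (seqDist_term_le_one γ t₁ t₂)

lemma seqDist_triangle (t₁ t₂ t₃ : G → A) :
    seqDist γ t₁ t₃ ≤ seqDist γ t₁ t₂ + seqDist γ t₂ t₃ := by
  classical
  refine ciSup_le fun i => ?_
  calc (1 / (i : ℝ)) * (if t₁ (γ i) = t₃ (γ i) then 0 else 1)
      ≤ (1 / (i : ℝ)) * (if t₁ (γ i) = t₂ (γ i) then 0 else 1) +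
          (1 / (i : ℝ)) * (if t₂ (γ i) = t₃ (γ i) then 0 else 1) := by
        rw [← mul_add]
        gcongr
        split_ifs <;> simp_all
    _ ≤ seqDist γ t₁ t₂ + seqDist γ t₂ t₃ :=
        add_le_add (le_ciSup (seqDist_bddAbove γ t₁ t₂) i) (le_ciSup (seqDist_bddAbove γ t₂ t₃) i)

lemma measurable_seqDist [MeasurableSpace A] [MeasurableSingletonClass A] [Countable A] :
    Measurable fun p : (G → A) × (G → A) => seqDist γ p.1 p.2 := by
  classical
  refine Measurable.iSup fun i => (Measurable.ite ?_ measurable_const measurable_const).const_mul _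
  exact measurableSet_eq_fun measurable_fst.eval measurable_snd.eval

lemma integrable_seqDist_comp [MeasurableSpace A] [MeasurableSingletonClass A] [Countable A]
    {Y : Type*} [MeasurableSpace Y] (ξ : Measure Y) [IsFiniteMeasure ξ]
    {F : Y → (G → A) × (G → A)} (hF : Measurable F) :
    Integrable (fun y => seqDist γ (F y).1 (F y).2) ξ := by
  refine (integrable_const (1 : ℝ)).mono' ((measurable_seqDist γ).comp hF).aestronglyMeasurable
    (.of_forall fun y => ?_)
  rw [Real.norm_eq_abs, abs_of_nonneg (seqDist_nonneg _ _ _)]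
  exact seqDist_le_one _ _ _

end SeqDist

section Kantorovich

variable {G A : Type*} [MeasurableSpace A] (γ : ℕ → G)

lemma kantorovich_nonneg (μ₁ μ₂ : Measure (G → A)) : 0 ≤ kantorovich γ μ₁ μ₂ :=
  Real.sInf_nonneg (by rintro _ ⟨ξ, -, -, -, rfl⟩; exact integral_nonneg fun _ => seqDist_nonneg ..)

lemma kantorovich_le_integral {μ₁ μ₂ : Measure (G → A)} (ξ : Measure ((G → A) × (G → A)))
    [IsProbabilityMeasure ξ] (h₁ : ξ.map Prod.fst = μ₁) (h₂ : ξ.map Prod.snd = μ₂) :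
    kantorovich γ μ₁ μ₂ ≤ ∫ p, seqDist γ p.1 p.2 ∂ξ :=
  csInf_le ⟨0, by rintro _ ⟨ξ, -, -, -, rfl⟩; exact integral_nonneg fun _ => seqDist_nonneg ..⟩
    ⟨ξ, ‹_›, h₁, h₂, rfl⟩

lemma exists_coupling_integral_lt (μ₁ μ₂ : Measure (G → A)) [IsProbabilityMeasure μ₁]
    [IsProbabilityMeasure μ₂] {ε : ℝ} (hε : 0 < ε) :
    ∃ ξ : Measure ((G → A) × (G → A)), IsProbabilityMeasure ξ ∧ ξ.map Prod.fst = μ₁ ∧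
      ξ.map Prod.snd = μ₂ ∧ ∫ p, seqDist γ p.1 p.2 ∂ξ < kantorovich γ μ₁ μ₂ + ε := by
  by_contra! H
  have : kantorovich γ μ₁ μ₂ + ε ≤ kantorovich γ μ₁ μ₂ :=
    le_csInf ⟨_, μ₁.prod μ₂, inferInstance, by simp, by simp, rfl⟩
      fun _ ⟨ξ, hξ, h₁, h₂, hr⟩ => hr ▸ H ξ hξ h₁ h₂
  linarith

-- Without couplings the defining infimum is `sInf ∅ = 0`.
lemma kantorovich_eq_zero_of_not_isProbabilityMeasure {μ₁ μ₂ : Measure (G → A)}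
    (h : ¬(IsProbabilityMeasure μ₁ ∧ IsProbabilityMeasure μ₂)) : kantorovich γ μ₁ μ₂ = 0 := by
  refine (congrArg sInf ?_).trans Real.sInf_empty
  refine Set.eq_empty_iff_forall_notMem.2 ?_
  rintro _ ⟨ξ, hξ, rfl, rfl, -⟩
  exact h ⟨Measure.isProbabilityMeasure_map measurable_fst.aemeasurable,
    Measure.isProbabilityMeasure_map measurable_snd.aemeasurable⟩

end Kantorovich

section Gluing

variable {α β δ : Type*} [MeasurableSpace α] [MeasurableSpace β] [MeasurableSpace δ]

-- Glue along `β`: disintegrate `ξ₂` over its first factor and compose with `ξ₁`.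
lemma exists_glued_measure [StandardBorelSpace δ] [Nonempty δ] (ξ₁ : Measure (α × β))
    (ξ₂ : Measure (β × δ)) [IsProbabilityMeasure ξ₁] [IsFiniteMeasure ξ₂]
    (h : ξ₁.map Prod.snd = ξ₂.map Prod.fst) :
    ∃ ν : Measure ((α × β) × δ), IsProbabilityMeasure ν ∧ ν.map Prod.fst = ξ₁ ∧
      ν.map (fun p => (p.1.2, p.2)) = ξ₂ := by
  set κ := ξ₂.condKernel
  have hmid : Measurable fun p : (α × β) × δ => (p.1.2, p.2) :=
    measurable_fst.snd.prodMk measurable_snd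
  refine ⟨ξ₁ ⊗ₘ κ.comap Prod.snd measurable_snd, inferInstance, Measure.fst_compProd _ _, ?_⟩
  ext s hs
  rw [Measure.map_apply hmid hs, Measure.compProd_apply (hmid hs)]
  calc ∫⁻ p, κ p.2 (Prod.mk p.2 ⁻¹' s) ∂ξ₁
      = ∫⁻ b, κ b (Prod.mk b ⁻¹' s) ∂(ξ₁.map Prod.snd) :=
        (lintegral_map (Kernel.measurable_kernel_prodMk_left hs) measurable_snd).symm
    _ = ξ₂ s := by rw [h, ← Measure.fst, ← Measure.compProd_apply hs, ξ₂.disintegrate κ]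

end Gluing

section Triangle

variable {G A : Type*} [Countable G] [MeasurableSpace A] [Countable A]
  [DiscreteMeasurableSpace A] (γ : ℕ → G)

lemma kantorovich_triangle (μ₁ μ₂ μ₃ : Measure (G → A)) [IsProbabilityMeasure μ₂] :
    kantorovich γ μ₁ μ₃ ≤ kantorovich γ μ₁ μ₂ + kantorovich γ μ₂ μ₃ := by
  by_cases hμ : IsProbabilityMeasure μ₁ ∧ IsProbabilityMeasure μ₃
  swap
  · rw [kantorovich_eq_zero_of_not_isProbabilityMeasure γ hμ]
    exact add_nonneg (kantorovich_nonneg ..) (kantorovich_nonneg ..)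
  obtain ⟨_, _⟩ := hμ
  have := nonempty_of_isProbabilityMeasure μ₂
  refine le_of_forall_pos_le_add fun ε hε => ?_
  obtain ⟨ξ₁, _, h₁f, h₁s, hξ₁⟩ := exists_coupling_integral_lt γ μ₁ μ₂ (half_pos hε)
  obtain ⟨ξ₂, _, h₂f, h₂s, hξ₂⟩ := exists_coupling_integral_lt γ μ₂ μ₃ (half_pos hε)
  obtain ⟨ν, _, hν₁, hν₂⟩ := exists_glued_measure ξ₁ ξ₂ (h₁s.trans h₂f.symm)
  have hout : Measurable fun p : ((G → A) × (G → A)) × (G → A) => (p.1.1, p.2) :=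
    measurable_fst.fst.prodMk measurable_snd
  have hmid : Measurable fun p : ((G → A) × (G → A)) × (G → A) => (p.1.2, p.2) :=
    measurable_fst.snd.prodMk measurable_snd
  have hcost (f : ((G → A) × (G → A)) × (G → A) → (G → A) × (G → A)) (hf : Measurable f) :
      ∫ p, seqDist γ p.1 p.2 ∂(ν.map f) = ∫ q, seqDist γ (f q).1 (f q).2 ∂ν :=
    integral_map hf.aemeasurable (measurable_seqDist γ).aestronglyMeasurable
  have hν₃ : IsProbabilityMeasure (ν.map fun p => (p.1.1, p.2)) :=
    Measure.isProbabilityMeasure_map hout.aemeasurable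
  calc kantorovich γ μ₁ μ₃
      ≤ ∫ q, seqDist γ q.1.1 q.2 ∂ν := by
        rw [← hcost _ hout]
        refine kantorovich_le_integral γ _ ?_ ?_
        · rw [Measure.map_map measurable_fst hout, ← h₁f, ← hν₁,
            Measure.map_map measurable_fst measurable_fst]
          rfl
        · rw [Measure.map_map measurable_snd hout, ← h₂s, ← hν₂,
            Measure.map_map measurable_snd hmid]
          rfl
    _ ≤ ∫ q, (seqDist γ q.1.1 q.1.2 + seqDist γ q.1.2 q.2) ∂ν :=
        integral_mono (integrable_seqDist_comp γ ν hout)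
          ((integrable_seqDist_comp γ ν measurable_fst).add (integrable_seqDist_comp γ ν hmid))
          fun q => seqDist_triangle γ _ _ _
    _ = ∫ p, seqDist γ p.1 p.2 ∂ξ₁ + ∫ p, seqDist γ p.1 p.2 ∂ξ₂ := by
        rw [integral_add (integrable_seqDist_comp γ ν measurable_fst)
          (integrable_seqDist_comp γ ν hmid), ← hν₁, ← hν₂, hcost _ measurable_fst, hcost _ hmid]
    _ ≤ kantorovich γ μ₁ μ₂ + kantorovich γ μ₂ μ₃ + ε := by linarith

end Triangle

section Approximation

variable {G : Type*} [Group G] {X : Type*} [MeasurableSpace X] [MulAction G X]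

lemma isProbabilityMeasure_distr {A : Type*} [MeasurableSpace A] (μ : Measure X)
    [IsProbabilityMeasure μ] (hact : ∀ g : G, Measurable fun x : X => g • x) {f : X → A}
    (hf : Measurable f) : IsProbabilityMeasure (distr G μ f) :=
  Measure.isProbabilityMeasure_map (measurable_pi_lambda _ fun g => hf.comp (hact g)).aemeasurable

lemma weaklyApproximable_iff_frequently (γ : ℕ → G) (μ : Measure X) {V : ℕ → Type}
    (σ : ∀ i, G → Equiv.Perm (V i)) :
    WeaklyApproximable G γ μ σ ↔
      ∀ (A : Type) [Fintype A] [MeasurableSpace A] [DiscreteMeasurableSpace A] (f : X → A),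
        Measurable f → ∀ ε : ℝ, 0 < ε → ∃ᶠ i in atTop, ∃ τ : V i → A,
          kantorovich γ (Theta (σ i) (Measure.dirac τ)) (distr G μ f) < ε := by
  constructor
  · intro h A _ _ _ f hf ε hε
    obtain ⟨φ, hφ, τ, hτ⟩ := h A f hf
    exact hφ.tendsto_atTop.frequently
      ((hτ.eventually (gt_mem_nhds hε)).frequently.mono fun j hj => ⟨τ j, hj⟩)
  · intro h A _ _ _ f hf
    obtain ⟨φ, hφ, hP⟩ := extraction_forall_of_frequently fun n : ℕ =>
      h A f hf (1 / (n + 1)) Nat.one_div_pos_of_nat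
    choose τ hτ using hP
    exact ⟨φ, hφ, τ, squeeze_zero (fun _ => kantorovich_nonneg ..) (fun n => (hτ n).le)
      tendsto_one_div_add_atTop_nhds_zero_nat⟩

end Approximation

theorem weaklyContained_sofic_general {G : Type*} [Group G] [Countable G] (γ : ℕ → G)
    {X₁ X₂ : Type*} [MeasurableSpace X₁] [MeasurableSpace X₂] [MulAction G X₁] [MulAction G X₂]
    (μ₁ : Measure X₁) (μ₂ : Measure X₂) [IsProbabilityMeasure μ₂] (hact₂ : IsPmpAction G μ₂)
    (hwc : WeaklyContained G γ μ₁ μ₂) (hsofic : SoficAction G γ μ₂) :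
    SoficAction G γ μ₁ := by
  obtain ⟨V, σ, hfin, hσ, happrox⟩ := hsofic
  refine ⟨V, σ, hfin, hσ, (weaklyApproximable_iff_frequently γ μ₁ σ).2 ?_⟩
  intro A _ _ _ f₁ hf₁ ε hε
  obtain ⟨f₂, hf₂, hclose⟩ := hwc A f₁ hf₁ (ε / 2) (half_pos hε)
  have := isProbabilityMeasure_distr μ₂ (fun g => (hact₂ g).measurable) hf₂
  refine ((weaklyApproximable_iff_frequently γ μ₂ σ).1 happrox A f₂ hf₂ (ε / 2)
    (half_pos hε)).mono ?_
  rintro i ⟨τ, hτ⟩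
  exact ⟨τ, (kantorovich_triangle γ _ (distr G μ₂ f₂) _).trans_lt (by linarith)⟩

/-- If `T₁` is weakly contained in `T₂` and `T₂` is sofic, then
`T₁` is sofic. -/
theorem weaklyContained_sofic {G : Type*} [Group G] [Countable G]
    (γ : ℕ → G) (hγ : IsEnumeration γ) (hG : SoficGroup G)
    {X₁ X₂ : Type*} [MeasurableSpace X₁] [MeasurableSpace X₂]
    [StandardBorelSpace X₁] [StandardBorelSpace X₂] [MulAction G X₁] [MulAction G X₂]
    (μ₁ : Measure X₁) (μ₂ : Measure X₂)
    [IsProbabilityMeasure μ₁] [IsProbabilityMeasure μ₂]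
    (hact₁ : IsPmpAction G μ₁) (hact₂ : IsPmpAction G μ₂)
    (hwc : WeaklyContained G γ μ₁ μ₂) (hsofic : SoficAction G γ μ₂) :
    SoficAction G γ μ₁ :=
  weaklyContained_sofic_general γ μ₁ μ₂ hact₂ hwc hsofic

end SoficPaper
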